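/- Let V be a ℚ-vector space with dim_ℚ V = 2 and let L be a ℚ-subalgebra of End_ℚ(V) that is a division ring. Then L is commutative. -/

import Mathlib

/-!
For `v ≠ 0` the map `x ↦ x v` is injective on `L`, because nonzero elements of `L` are invertible;
hence `dim_ℚ L ≤ 2`. In a unital algebra of dimension at most `2`, any non-scalar `x` generates
the whole algebra, so everything lies in the commutative algebra `ℚ[x]`.
-/

open Module

theorem Algebra.commute_of_finrank_le_two {F E : Type*} [Field F] [Ring E] [Algebra F E]
    [FiniteDimensional F E] (h : finrank F E ≤ 2) (x y : E) : Commute x y := by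
  by_cases hx : x ∈ (⊥ : Subalgebra F E)
  · obtain ⟨r, rfl⟩ := Algebra.mem_bot.1 hx
    exact Algebra.commutes r y
  have : Nontrivial E := nontrivial_of_ne x 0 fun h0 => hx (h0 ▸ zero_mem _)
  have hne : Algebra.adjoin F {x} ≠ ⊥ := fun hbot =>
    hx (hbot ▸ Algebra.subset_adjoin (Set.mem_singleton x))
  have hpos : 0 < finrank F (Algebra.adjoin F {x}) := finrank_pos
  have hone : finrank F (Algebra.adjoin F {x}) ≠ 1 := mt Subalgebra.finrank_eq_one_iff.1 hne
  have htop : Algebra.adjoin F {x} = ⊤ := by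
    rw [← Algebra.toSubmodule_eq_top]
    exact Submodule.eq_top_of_finrank_eq ((Submodule.finrank_le _).antisymm
      (h.trans (by omega : 2 ≤ finrank F (Algebra.adjoin F {x}))))
  exact Algebra.commute_of_mem_adjoin_self (htop ▸ Algebra.mem_top)

theorem Subalgebra.finrank_le_of_forall_isUnit {K V : Type*} [Field K] [AddCommGroup V]
    [Module K V] [FiniteDimensional K V] [Nontrivial V] (L : Subalgebra K (Module.End K V))
    (hL : ∀ x : L, x ≠ 0 → IsUnit x) : finrank K L ≤ finrank K V := by
  obtain ⟨v, hv⟩ := exists_ne (0 : V)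
  let evalAt : L →ₗ[K] V := LinearMap.applyₗ v ∘ₗ L.val.toLinearMap
  refine LinearMap.finrank_le_finrank_of_injective (f := evalAt) ?_
  rw [← LinearMap.ker_eq_bot, LinearMap.ker_eq_bot']
  intro x hxv
  by_contra hx
  obtain ⟨u, rfl⟩ := hL x hx
  apply hv
  calc v = ((((u⁻¹ : Lˣ) : L) * u : L) : Module.End K V) v := by rw [u.inv_mul]; rfl
    _ = (((u⁻¹ : Lˣ) : L) : Module.End K V) (((u : L) : Module.End K V) v) := rfl
    _ = 0 := by rw [show ((u : L) : Module.End K V) v = 0 from hxv, map_zero]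

/-- If `V` is a `2`-dimensional `ℚ`-vector space and `L` is a `ℚ`-subalgebra of `End_ℚ(V)`
that is a division ring, then `L` is commutative. -/
theorem div_subalgebra_of_end_two_dim_comm
    (V : Type*) [AddCommGroup V] [Module ℚ V]
    (hV : Module.finrank ℚ V = 2)
    (L : Subalgebra ℚ (Module.End ℚ V))
    (hL : ∀ x : L, x ≠ 0 → IsUnit x) :
    ∀ x y : L, x * y = y * x := by
  have : Nontrivial V := Module.nontrivial_of_finrank_eq_succ hV
  have : FiniteDimensional ℚ V := .of_finrank_eq_succ hV
  exact Algebra.commute_of_finrank_le_two (hV ▸ L.finrank_le_of_forall_isUnit hL)
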